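/- Let x, y ∈ ℝⁿ with n ≥ 2 and y strictly decreasing (y₁ > y₂ > ⋯ > yₙ). Suppose there exist real numbers λ ≠ γ and an index j such that xⱼ = γ and xᵢ = λ for all i ≠ j (x is constant except in exactly one coordinate). Then the set I_M(x,y) = {P : P is an n×n permutation matrix and Σᵢ (Pᵀ *ᵥ x)ᵢ · yᵢ = M(x,y)} has cardinality exactly (n−1)!. -/

import Mathlib

open Matrix BigOperators

/-- A matrix is doubly stochastic: nonnegative entries, row sums and column sums all 1. -/
def IsDoublyStochastic {n : ℕ} (A : Matrix (Fin n) (Fin n) ℝ) : Prop :=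
  (∀ i j, 0 ≤ A i j) ∧ (∀ i, ∑ j, A i j = 1) ∧ (∀ j, ∑ i, A i j = 1)

/-- `Maj x y` means `x ≺ y`: `x` is majorized by `y`. -/
def Maj {n : ℕ} (x y : Fin n → ℝ) : Prop :=
  ∃ A : Matrix (Fin n) (Fin n) ℝ, IsDoublyStochastic A ∧ x = A *ᵥ y

/-- `MajEq x y` means `x ∼ y`: mutual majorization. -/
def MajEq {n : ℕ} (x y : Fin n → ℝ) : Prop := Maj x y ∧ Maj y x

/-- `P` is a permutation matrix. -/
def IsPermMatrix {n : ℕ} (P : Matrix (Fin n) (Fin n) ℝ) : Prop :=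
  ∃ σ : Equiv.Perm (Fin n), P = σ.permMatrix ℝ

/-- The increasing rearrangement `x↑` of a vector. -/
noncomputable def incSort {n : ℕ} (x : Fin n → ℝ) : Fin n → ℝ := x ∘ Tuple.sort x

/-- The decreasing rearrangement `x↓` of a vector. -/
noncomputable def decSort {n : ℕ} (x : Fin n → ℝ) : Fin n → ℝ :=
  fun i => (x ∘ Tuple.sort x) i.rev

/-!
For a permutation `σ`, the pairing of `x ∘ σ⁻¹` with `y` equals `λ ∑ y + (γ - λ) y (σ j)`: it
depends on `σ` only through `σ j`, and injectively so, since `y` is injective and `γ ≠ λ`.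
The decreasing rearrangement `x↓` is `x ∘ τ` for the sorting permutation `τ`, so `M(x, y)` is
the pairing at `σ = τ⁻¹`, and `I_M(x, y)` corresponds to the permutations with
`σ j = τ⁻¹ j`, of which there are `(n - 1)!`.
-/

section Perm

variable {α : Type*} [DecidableEq α]

theorem permMatrix_injective (R : Type*) [MulZeroOneClass R] [Nontrivial R] :
    Function.Injective fun σ : Equiv.Perm α => σ.permMatrix R := by
  intro σ τ h
  ext i
  have hentry := congrFun (congrFun h i) (σ i)
  simp only [Equiv.Perm.permMatrix, PEquiv.toMatrix_apply, Equiv.toPEquiv_apply,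
    Option.mem_def, Option.some.injEq] at hentry
  by_contra hne
  exact one_ne_zero (hentry.trans (if_neg fun h' => hne h'.symm))

variable [Fintype α]

theorem card_perm_apply_eq (a b : α) :
    Fintype.card {σ : Equiv.Perm α // σ a = b} = (Fintype.card α - 1).factorial := by
  have toFixing : {σ : Equiv.Perm α // σ a = b} ≃ {σ : Equiv.Perm α // σ a = a} :=
    { toFun := fun σ => ⟨Equiv.swap b a * σ, by simp [σ.2]⟩
      invFun := fun τ => ⟨Equiv.swap b a * τ, by simp [τ.2]⟩
      left_inv := fun σ => by simp [← mul_assoc]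
      right_inv := fun τ => by simp [← mul_assoc] }
  have fixingEquiv : {σ : Equiv.Perm α // σ a = a} ≃ Equiv.Perm {x : α // x ≠ a} :=
    (Equiv.subtypeEquivRight fun σ => by simp).trans
      (Equiv.Perm.subtypeEquivSubtypePerm (· ≠ a)).symm
  rw [Fintype.card_congr (toFixing.trans fixingEquiv), Fintype.card_perm,
    Fintype.card_subtype_compl, Fintype.card_subtype_eq]

theorem sum_permMatrix_transpose_mulVec_mul {R : Type*} [CommRing R] (σ : Equiv.Perm α)
    (x y : α → R) :
    ∑ i, ((σ.permMatrix R)ᵀ *ᵥ x) i * y i = ∑ i, x i * y (σ i) := by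
  rw [transpose_permMatrix, permMatrix_mulVec, ← Equiv.sum_comp σ (fun i => (x ∘ ⇑σ⁻¹) i * y i)]
  simp

theorem sum_mul_eq_of_eq_off {R : Type*} [CommRing R] {x : α → R} {c : R} (j : α)
    (hx : ∀ i, i ≠ j → x i = c) (z : α → R) :
    ∑ i, x i * z i = c * ∑ i, z i + (x j - c) * z j := by
  rw [Fintype.sum_eq_add_sum_compl j, Fintype.sum_eq_add_sum_compl j z, mul_add, Finset.mul_sum,
    Finset.sum_congr rfl fun i hi => by rw [hx i (by simpa using hi)]]
  ring

end Perm

theorem ncard_setOf_isPermMatrix_and {n : ℕ} (p : Matrix (Fin n) (Fin n) ℝ → Prop) :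
    {P | IsPermMatrix P ∧ p P}.ncard = Nat.card {σ : Equiv.Perm (Fin n) // p (σ.permMatrix ℝ)} := by
  have himage : {P | IsPermMatrix P ∧ p P} =
      (fun σ : Equiv.Perm (Fin n) => σ.permMatrix ℝ) '' {σ | p (σ.permMatrix ℝ)} := by
    ext P
    constructor
    · rintro ⟨⟨σ, rfl⟩, hp⟩
      exact ⟨σ, hp, rfl⟩
    · rintro ⟨σ, hp, rfl⟩
      exact ⟨⟨σ, rfl⟩, hp⟩
  rw [himage, Set.ncard_image_of_injective _ (permMatrix_injective ℝ), ← Nat.card_coe_set_eq]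
  rfl

section decSort

variable {n : ℕ}

theorem decSort_eq_comp (x : Fin n → ℝ) :
    decSort x = x ∘ ⇑(Tuple.sort x * Fin.revPerm : Equiv.Perm (Fin n)) := rfl

theorem antitone_decSort (x : Fin n → ℝ) : Antitone (decSort x) :=
  (Tuple.monotone_sort x).comp_antitone Fin.rev_anti

theorem decSort_eq_self_of_antitone {y : Fin n → ℝ} (hy : Antitone y) : decSort y = y := by
  have hsorted := antitone_decSort y
  rw [decSort_eq_comp] at hsorted ⊢
  exact Tuple.unique_antitone (τ := 1) hsorted hy

end decSort

theorem card_IM_eq_of_almost_constant_general {n : ℕ} (x y : Fin n → ℝ)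
    (hy : StrictAnti y) (lam gam : ℝ) (hlg : lam ≠ gam) (j : Fin n)
    (hj : x j = gam) (hx : ∀ i, i ≠ j → x i = lam) :
    {P : Matrix (Fin n) (Fin n) ℝ | IsPermMatrix P ∧
      ∑ i, (Pᵀ *ᵥ x) i * y i = ∑ i, decSort x i * decSort y i}.ncard
      = (n - 1).factorial := by
  have hvalue : ∀ σ : Equiv.Perm (Fin n),
      ∑ i, ((σ.permMatrix ℝ)ᵀ *ᵥ x) i * y i = lam * ∑ i, y i + (gam - lam) * y (σ j) := by
    intro σ
    rw [sum_permMatrix_transpose_mulVec_mul, sum_mul_eq_of_eq_off j hx, hj,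
      Equiv.sum_comp σ y]
  set τ : Equiv.Perm (Fin n) := Tuple.sort x * Fin.revPerm
  have hmax : ∑ i, decSort x i * decSort y i = lam * ∑ i, y i + (gam - lam) * y (τ⁻¹ j) := by
    rw [← hvalue, decSort_eq_self_of_antitone hy.antitone, transpose_permMatrix, inv_inv,
      permMatrix_mulVec, decSort_eq_comp]
  have hiff : ∀ σ : Equiv.Perm (Fin n),
      ∑ i, ((σ.permMatrix ℝ)ᵀ *ᵥ x) i * y i = ∑ i, decSort x i * decSort y i ↔ σ j = τ⁻¹ j := by
    intro σ
    rw [hvalue, hmax, add_right_inj, mul_right_inj' (sub_ne_zero.mpr hlg.symm),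
      hy.injective.eq_iff]
  rw [ncard_setOf_isPermMatrix_and, Nat.card_congr (Equiv.subtypeEquivRight hiff),
    Nat.card_eq_fintype_card, card_perm_apply_eq, Fintype.card_fin]

/-- if `x` is constant except in exactly one coordinate and `y` is
strictly decreasing, then `|I_M(x,y)| = (n - 1)!`. -/
theorem card_IM_eq_of_almost_constant {n : ℕ} (hn : 2 ≤ n) (x y : Fin n → ℝ)
    (hy : StrictAnti y) (lam gam : ℝ) (hlg : lam ≠ gam) (j : Fin n)
    (hj : x j = gam) (hx : ∀ i, i ≠ j → x i = lam) :
    {P : Matrix (Fin n) (Fin n) ℝ | IsPermMatrix P ∧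
      ∑ i, (Pᵀ *ᵥ x) i * y i = ∑ i, decSort x i * decSort y i}.ncard
      = (n - 1).factorial :=
  card_IM_eq_of_almost_constant_general x y hy lam gam hlg j hj hx
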